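/- The deformed matrix Ũ_n = D T D is invertible with |det(Ũ_n)| = Π_{i=1}^s (k_i k_{s+1−i}/n)^{−1} ≥ 1; more precisely det(Ũ_n) = (−1)^{s(s−1)/2} Π_{i=1}^s n/(k_i k_{s+1−i}), and each factor n/(k_i k_{s+1−i}) ≥ 1. -/

import Mathlib

/-!
Reversing the columns of `Ũ_n` gives an upper triangular matrix with diagonal entries
`n / (k_i k_{s+1-i})`, and the reversal of `s` columns has sign `(-1)^{s(s-1)/2}`. Each diagonal
entry is at least `1` because `m ↦ ⌊n/m⌋` is an order-reversing involution of `S_n`, so that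
`k_{s+1-i} = ⌊n/k_i⌋` and hence `k_i k_{s+1-i} ≤ n`.
-/

/-- The set of approximate divisors of `n`: distinct values of `⌊n/k⌋` for `1 ≤ k ≤ n`. -/
def Sn (n : ℕ) : Finset ℕ := (Finset.Icc 1 n).image (fun k => n / k)

/-- The increasing enumeration `k_1 < ⋯ < k_s` of `S_n` (0-indexed by `Fin s`). -/
noncomputable def kseq (n : ℕ) : Fin (Sn n).card → ℕ :=
  fun i => ((Sn n).orderIsoOfFin rfl i : ℕ)

/-- The deformed matrix `Ũ_n = D T D`, with entries `n/(k_i k_j)` on and above the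
antidiagonal and `0` below it. -/
noncomputable def Utilde (n : ℕ) : Matrix (Fin (Sn n).card) (Fin (Sn n).card) ℝ :=
  fun i j => if (i : ℕ) + (j : ℕ) + 1 ≤ (Sn n).card then
    (n : ℝ) / ((kseq n i : ℝ) * (kseq n j : ℝ)) else 0

open Equiv Finset

theorem Fin.sign_revPerm (s : ℕ) :
    Perm.sign (Fin.revPerm : Perm (Fin s)) = (-1) ^ (s * (s - 1) / 2) := by
  have inversions (j : Fin s) :
      ∏ i ∈ Iio j, (if revPerm i < revPerm j then (1 : ℤˣ) else -1) = (-1) ^ (j : ℕ) := by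
    rw [prod_congr rfl fun i hi => if_neg (by simpa using (mem_Iio.1 hi).le), Finset.prod_const,
      Fin.card_Iio]
  rw [Perm.sign_eq_prod_prod_Iio, prod_congr rfl fun j _ => inversions j, prod_pow_eq_pow_sum,
    Fin.sum_univ_eq_sum_range (fun i => i), sum_range_id]

theorem Matrix.det_of_eq_zero_of_antidiagonal_lt {R : Type*} [CommRing R] {s : ℕ}
    (M : Matrix (Fin s) (Fin s) R) (hM : ∀ i j : Fin s, s < (i : ℕ) + j + 1 → M i j = 0) :
    M.det = (-1) ^ (s * (s - 1) / 2) * ∏ i, M i i.rev := by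
  have hupper : (M.submatrix id Fin.revPerm).IsUpperTriangular := fun i j hji =>
    hM i j.rev (by rw [Fin.val_rev]; have : (j : ℕ) < i := hji; omega)
  have hperm := Matrix.det_permute' Fin.revPerm M
  rw [Matrix.det_of_isUpperTriangular hupper, Fin.sign_revPerm] at hperm
  rw [show ((-1 : R) ^ (s * (s - 1) / 2)) = (((-1 : ℤˣ) ^ (s * (s - 1) / 2) : ℤˣ) : ℤ) by
    push_cast; rfl]
  simp only [Matrix.submatrix_apply, id, Fin.revPerm_apply] at hperm
  rw [hperm, ← mul_assoc, ← Int.cast_mul, ← Units.val_mul, Int.units_mul_self]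
  simp

lemma pos_of_mem_Sn {n m : ℕ} (hm : m ∈ Sn n) : 0 < m := by
  obtain ⟨k, hk, rfl⟩ := mem_image.1 hm
  exact Nat.div_pos (mem_Icc.1 hk).2 (mem_Icc.1 hk).1

lemma div_mem_Sn {n m : ℕ} (hm : m ∈ Sn n) : n / m ∈ Sn n := by
  obtain ⟨k, -, rfl⟩ := mem_image.1 hm
  exact mem_image.2 ⟨n / k, mem_Icc.2 ⟨pos_of_mem_Sn hm, Nat.div_le_self n k⟩, rfl⟩

lemma div_div_of_mem_Sn {n m : ℕ} (hm : m ∈ Sn n) : n / (n / m) = m := by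
  have hm₀ := pos_of_mem_Sn hm
  have hnm₀ := pos_of_mem_Sn (div_mem_Sn hm)
  obtain ⟨k, hk, rfl⟩ := mem_image.1 hm
  apply le_antisymm
  · have hk_le : k ≤ n / (n / k) := (Nat.le_div_iff_mul_le hm₀).2 (Nat.mul_div_le n k)
    exact Nat.div_le_div_left hk_le (mem_Icc.1 hk).1
  · exact (Nat.le_div_iff_mul_le hnm₀).2 (Nat.mul_div_le n _)

lemma strictAntiOn_div_Sn (n : ℕ) : StrictAntiOn (n / ·) (Sn n : Set ℕ) := by
  intro a ha b hb hab
  refine (Nat.div_le_div_left hab.le (pos_of_mem_Sn ha)).lt_of_ne fun h => hab.ne ?_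
  rw [← div_div_of_mem_Sn ha, ← div_div_of_mem_Sn hb, h]

lemma kseq_mem (n : ℕ) (i : Fin (Sn n).card) : kseq n i ∈ Sn n :=
  ((Sn n).orderIsoOfFin rfl i).2

lemma kseq_strictMono (n : ℕ) : StrictMono (kseq n) :=
  fun _ _ h => ((Sn n).orderIsoOfFin rfl).strictMono h

lemma kseq_rev (n : ℕ) (i : Fin (Sn n).card) : kseq n i.rev = n / kseq n i := by
  have hmono : StrictMono fun j : Fin (Sn n).card => n / kseq n j.rev := fun a b hab =>
    strictAntiOn_div_Sn n (kseq_mem n _) (kseq_mem n _) (kseq_strictMono n (Fin.rev_lt_rev.2 hab))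
  have huniq := orderEmbOfFin_unique rfl (fun j => div_mem_Sn (kseq_mem n j.rev)) hmono
  have := congrFun huniq i.rev
  simp only [Fin.rev_rev] at this
  rw [this, kseq, coe_orderIsoOfFin_apply]

lemma kseq_mul_kseq_rev_le (n : ℕ) (i : Fin (Sn n).card) : kseq n i * kseq n i.rev ≤ n := by
  rw [kseq_rev]
  exact Nat.mul_div_le n _

lemma one_le_div_kseq_mul_kseq_rev (n : ℕ) (i : Fin (Sn n).card) :
    1 ≤ (n : ℝ) / ((kseq n i : ℝ) * (kseq n i.rev : ℝ)) := by
  have hpos : (0 : ℝ) < (kseq n i : ℝ) * (kseq n i.rev : ℝ) := by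
    have := pos_of_mem_Sn (kseq_mem n i)
    have := pos_of_mem_Sn (kseq_mem n i.rev)
    positivity
  exact (one_le_div hpos).2 (by exact_mod_cast kseq_mul_kseq_rev_le n i)

lemma det_Utilde (n : ℕ) :
    (Utilde n).det = (-1 : ℝ) ^ ((Sn n).card * ((Sn n).card - 1) / 2) *
      ∏ i : Fin (Sn n).card, (n : ℝ) / ((kseq n i : ℝ) * (kseq n i.rev : ℝ)) := by
  rw [Matrix.det_of_eq_zero_of_antidiagonal_lt (Utilde n) fun i j h => if_neg (by omega)]
  congr 1
  refine prod_congr rfl fun i _ => if_pos ?_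
  have := i.is_lt
  rw [Fin.val_rev]
  omega

theorem stmt_15_general (n : ℕ) :
    IsUnit (Utilde n).det ∧
    (Utilde n).det = (-1 : ℝ) ^ ((Sn n).card * ((Sn n).card - 1) / 2) *
      ∏ i : Fin (Sn n).card, (n : ℝ) / ((kseq n i : ℝ) * (kseq n i.rev : ℝ)) ∧
    (∀ i : Fin (Sn n).card, 1 ≤ (n : ℝ) / ((kseq n i : ℝ) * (kseq n i.rev : ℝ))) ∧
    1 ≤ |(Utilde n).det| := by
  have hprod : 1 ≤ ∏ i : Fin (Sn n).card, (n : ℝ) / ((kseq n i : ℝ) * (kseq n i.rev : ℝ)) :=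
    one_le_prod fun i _ => one_le_div_kseq_mul_kseq_rev n i
  have habs : 1 ≤ |(Utilde n).det| := by
    rwa [det_Utilde, abs_mul, abs_pow, abs_neg, abs_one, one_pow, one_mul,
      abs_of_pos (zero_lt_one.trans_le hprod)]
  exact ⟨isUnit_iff_ne_zero.2 (abs_pos.1 (zero_lt_one.trans_le habs)), det_Utilde n,
    one_le_div_kseq_mul_kseq_rev n, habs⟩

/-- `Ũ_n` is invertible with `det Ũ_n = (-1)^{s(s-1)/2} ∏_i n/(k_i k_{s+1-i})`, each
factor `n/(k_i k_{s+1-i}) ≥ 1`, and hence `|det Ũ_n| ≥ 1`. -/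
theorem stmt_15 (n : ℕ) (hn : 0 < n) :
    IsUnit (Utilde n).det ∧
    (Utilde n).det = (-1 : ℝ) ^ ((Sn n).card * ((Sn n).card - 1) / 2) *
      ∏ i : Fin (Sn n).card, (n : ℝ) / ((kseq n i : ℝ) * (kseq n i.rev : ℝ)) ∧
    (∀ i : Fin (Sn n).card, 1 ≤ (n : ℝ) / ((kseq n i : ℝ) * (kseq n i.rev : ℝ))) ∧
    1 ≤ |(Utilde n).det| :=
  stmt_15_general n
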